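/- The lower-bounding inequality y ≥ f(x) of the ideal non-extended formulation is facet-defining under strict activity: if M⁻ < 0 < M⁺, then there exist η + 2 affinely independent points (x, y, z) of P each satisfying y = f x. -/

import Mathlib

open Finset

/-- The affine function `f(x) = w · x + b`. -/
noncomputable def fAff {η : ℕ} (w : Fin η → ℝ) (b : ℝ) (x : Fin η → ℝ) : ℝ :=
  (∑ i, w i * x i) + b

/-- The rectified linear unit. -/
noncomputable def ReLU (v : ℝ) : ℝ := max 0 v

/-- The box `[L, U]`. -/
def Box {η : ℕ} (L U : Fin η → ℝ) : Set (Fin η → ℝ) :=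
  {x | ∀ i, L i ≤ x i ∧ x i ≤ U i}

/-- `L̆ i`. -/
noncomputable def Lbreve {η : ℕ} (w L U : Fin η → ℝ) (i : Fin η) : ℝ :=
  if 0 ≤ w i then L i else U i

/-- `Ŭ i`. -/
noncomputable def Ubreve {η : ℕ} (w L U : Fin η → ℝ) (i : Fin η) : ℝ :=
  if 0 ≤ w i then U i else L i

/-- The graph of the ReLU neuron over the box. -/
noncomputable def grSet {η : ℕ} (w : Fin η → ℝ) (b : ℝ) (L U : Fin η → ℝ) :
    Set ((Fin η → ℝ) × ℝ) :=
  {p | ∃ x ∈ Box L U, p = (x, ReLU (fAff w b x))}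

/-- The LP relaxation `P` of the ideal non-extended formulation. A point is
`(x, y, z)` with `x = p.1`, `y = p.2.1`, `z = p.2.2`. -/
noncomputable def Pset {η : ℕ} (w : Fin η → ℝ) (b : ℝ) (L U : Fin η → ℝ) :
    Set ((Fin η → ℝ) × ℝ × ℝ) :=
  {p | p.1 ∈ Box L U ∧ 0 ≤ p.2.1 ∧ 0 ≤ p.2.2 ∧ p.2.2 ≤ 1 ∧ fAff w b p.1 ≤ p.2.1 ∧
    ∀ I : Finset (Fin η), (∀ i ∈ I, w i ≠ 0) →
      p.2.1 ≤ (∑ i ∈ I, w i * (p.1 i - Lbreve w L U i * (1 - p.2.2)))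
        + (b + ∑ i ∈ Iᶜ, w i * Ubreve w L U i) * p.2.2}

/-- The LP relaxation `R` of the big-`M` formulation. -/
noncomputable def Rset {η : ℕ} (w : Fin η → ℝ) (b : ℝ) (L U : Fin η → ℝ) :
    Set ((Fin η → ℝ) × ℝ × ℝ) :=
  {p | p.1 ∈ Box L U ∧ 0 ≤ p.2.1 ∧ 0 ≤ p.2.2 ∧ p.2.2 ≤ 1 ∧ fAff w b p.1 ≤ p.2.1 ∧
    p.2.1 ≤ fAff w b p.1 - ((∑ i, w i * Lbreve w L U i) + b) * (1 - p.2.2) ∧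
    p.2.1 ≤ ((∑ i, w i * Ubreve w L U i) + b) * p.2.2}

/-- The LP relaxation `Q` of the multiple-choice extended formulation. A point is
`(x, y, z, x⁰, x¹, y⁰, y¹)`. -/
noncomputable def Qset {η : ℕ} (w : Fin η → ℝ) (b : ℝ) (L U : Fin η → ℝ) :
    Set ((Fin η → ℝ) × ℝ × ℝ × (Fin η → ℝ) × (Fin η → ℝ) × ℝ × ℝ) :=
  {q | match q with
    | (x, y, z, x0, x1, y0, y1) =>
      x = x0 + x1 ∧ y = y0 + y1 ∧ y0 = 0 ∧
      (∑ i, w i * x0 i) + b * (1 - z) ≤ 0 ∧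
      y1 = (∑ i, w i * x1 i) + b * z ∧ 0 ≤ y1 ∧
      (∀ i, L i * (1 - z) ≤ x0 i ∧ x0 i ≤ U i * (1 - z)) ∧
      (∀ i, L i * z ≤ x1 i ∧ x1 i ≤ U i * z) ∧
      0 ≤ z ∧ z ≤ 1}

/-! With `t = M⁻ / (M⁻ - M⁺) ∈ [0, 1)`, the box point `x* = t • Ŭ + (1 - t) • L̆` has
`f x* = 0`, and `(x*, 0, t) ∈ P` because at `x = t • Ŭ + (1 - t) • L̆` every constraint indexed
by `I` reads `y ≤ t M⁺`. The other `η + 1` points lie on the face `z = 1`, where the constraints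
indexed by `I` hold automatically: they are `Ŭ` and, for each `i`, `Ŭ` with its `i`-th
coordinate replaced by `x*ᵢ`, each lifted to `y = f x`. Resetting all other coordinates of `x*`
to those of `Ŭ` cannot decrease `f`, so `f ≥ f x* = 0` there. Seen from `(Ŭ, M⁺, 1)` the
`z = 1` points are displaced along distinct coordinate axes, since `L < U` forces `x*ᵢ ≠ Ŭᵢ`,
and the last point leaves the hyperplane `z = 1`. -/

theorem affineIndependent_finCons_iff {k V P : Type*} [Ring k] [AddCommGroup V] [Module k V]
    [AddTorsor V P] {n : ℕ} (p₀ : P) (q : Fin n → P) :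
    AffineIndependent k (Fin.cons p₀ q : Fin (n + 1) → P) ↔
      LinearIndependent k fun i => q i -ᵥ p₀ := by
  rw [affineIndependent_iff_linearIndependent_vsub k _ 0,
    ← linearIndependent_equiv (finSuccAboveEquiv 0)]
  simp [Function.comp_def, finSuccAboveEquiv_apply]

theorem affineIndependent_finCons_finSnoc_update {K : Type*} [Field K] {n : ℕ} (u x : Fin n → K)
    (hx : ∀ i, x i ≠ u i) (a : K) (h : Fin n → K) (y t : K) (ht : t ≠ 1) :
    AffineIndependent K (Fin.cons (u, a, 1)
      (Fin.snoc (fun i => (Function.update u i (x i), h i, 1)) (x, y, t)) :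
        Fin (n + 2) → (Fin n → K) × K × K) := by
  rw [affineIndependent_finCons_iff]
  simp only [vsub_eq_sub]
  rw [← Function.comp_def (· - _), Fin.comp_snoc, linearIndependent_finSnoc]
  constructor
  · refine LinearIndependent.of_comp (LinearMap.fst K _ _) ?_
    have hsingle : LinearIndependent K fun i => (Pi.single i (x i - u i) : Fin n → K) :=
      Pi.linearIndependent_single_of_ne_zero fun i => sub_ne_zero.2 (hx i)
    convert hsingle using 1
    ext i j
    by_cases hji : j = i
    · subst hji; simp
    · simp [hji]
  · set φ : (Fin n → K) × K × K →ₗ[K] K := LinearMap.snd K _ _ ∘ₗ LinearMap.snd K _ _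
    have hspan : Submodule.span K (Set.range fun i =>
        ((Function.update u i (x i), h i, (1 : K)) - (u, a, 1))) ≤ LinearMap.ker φ := by
      rw [Submodule.span_le]
      rintro _ ⟨i, rfl⟩
      simp [φ]
    intro hmem
    have := hspan hmem
    simp [φ, sub_eq_zero, ht] at this

section ReluFormulation

variable {η : ℕ} {w : Fin η → ℝ} {b : ℝ} {L U : Fin η → ℝ}

noncomputable def breveSegment (w L U : Fin η → ℝ) (t : ℝ) : Fin η → ℝ :=
  t • Ubreve w L U + (1 - t) • Lbreve w L U

theorem Box_eq_Icc : Box L U = Set.Icc L U := by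
  ext x
  simp [Box, Pi.le_def, forall_and]

theorem Lbreve_mem_Box (hLU : ∀ i, L i ≤ U i) : Lbreve w L U ∈ Box L U := fun i => by
  unfold Lbreve
  split_ifs
  exacts [⟨le_rfl, hLU i⟩, ⟨hLU i, le_rfl⟩]

theorem Ubreve_mem_Box (hLU : ∀ i, L i ≤ U i) : Ubreve w L U ∈ Box L U := fun i => by
  unfold Ubreve
  split_ifs
  exacts [⟨hLU i, le_rfl⟩, ⟨le_rfl, hLU i⟩]

theorem breveSegment_mem_Box (hLU : ∀ i, L i ≤ U i) {t : ℝ} (ht0 : 0 ≤ t) (ht1 : t ≤ 1) :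
    breveSegment w L U t ∈ Box L U := by
  rw [Box_eq_Icc]
  exact convex_Icc L U (Box_eq_Icc ▸ Ubreve_mem_Box hLU) (Box_eq_Icc ▸ Lbreve_mem_Box hLU)
    ht0 (sub_nonneg.2 ht1) (add_sub_cancel t 1)

theorem update_mem_Box {x y : Fin η → ℝ} (hx : x ∈ Box L U) (hy : y ∈ Box L U) (i : Fin η) :
    Function.update x i (y i) ∈ Box L U := by
  intro j
  by_cases hji : j = i
  · subst hji
    simpa using hy j
  · simpa [hji] using hx j

theorem mul_le_mul_Ubreve {x : Fin η → ℝ} (hx : x ∈ Box L U) (i : Fin η) :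
    w i * x i ≤ w i * Ubreve w L U i := by
  unfold Ubreve
  split_ifs with hw
  · exact mul_le_mul_of_nonneg_left (hx i).2 hw
  · exact mul_le_mul_of_nonpos_left (hx i).1 (not_le.1 hw).le

theorem fAff_le_fAff_update_Ubreve {x : Fin η → ℝ} (hx : x ∈ Box L U) (i : Fin η) :
    fAff w b x ≤ fAff w b (Function.update (Ubreve w L U) i (x i)) := by
  refine add_le_add (sum_le_sum fun j _ => ?_) le_rfl
  by_cases hji : j = i
  · subst hji
    simp
  · simpa [hji] using mul_le_mul_Ubreve hx j

theorem fAff_smul_add_one_sub_smul (x y : Fin η → ℝ) (t : ℝ) :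
    fAff w b (t • x + (1 - t) • y) = t * fAff w b x + (1 - t) * fAff w b y := by
  simp only [fAff, Pi.add_apply, Pi.smul_apply, smul_eq_mul, mul_add, sum_add_distrib,
    mul_left_comm (w _), ← mul_sum]
  ring

theorem exists_fAff_breveSegment_eq_zero (hMneg : fAff w b (Lbreve w L U) < 0)
    (hMpos : 0 < fAff w b (Ubreve w L U)) :
    ∃ t : ℝ, 0 ≤ t ∧ t < 1 ∧ fAff w b (breveSegment w L U t) = 0 := by
  simp only [breveSegment, fAff_smul_add_one_sub_smul]
  set Mp := fAff w b (Ubreve w L U)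
  set Mm := fAff w b (Lbreve w L U)
  have hgap : Mm - Mp < 0 := by linarith
  refine ⟨Mm / (Mm - Mp), div_nonneg_of_nonpos hMneg.le hgap.le,
    (div_lt_one_of_neg hgap).2 (by linarith), ?_⟩
  field_simp [hgap.ne]
  ring

theorem breveSegment_apply_ne_Ubreve (hLU : ∀ i, L i < U i) {t : ℝ} (ht : t < 1) (i : Fin η) :
    breveSegment w L U t i ≠ Ubreve w L U i := by
  have hne : Lbreve w L U i - Ubreve w L U i ≠ 0 := by
    unfold Lbreve Ubreve
    split_ifs <;> linarith [hLU i]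
  intro h
  have : (1 - t) * (Lbreve w L U i - Ubreve w L U i) = 0 := by
    simp only [breveSegment, Pi.add_apply, Pi.smul_apply, smul_eq_mul] at h
    linear_combination h
  exact hne ((mul_eq_zero.1 this).resolve_left (sub_ne_zero.2 ht.ne'))

theorem mk_fAff_one_mem_Pset {x : Fin η → ℝ} (hx : x ∈ Box L U) (hf : 0 ≤ fAff w b x) :
    (x, fAff w b x, 1) ∈ Pset w b L U := by
  refine ⟨hx, hf, zero_le_one, le_rfl, le_rfl, fun I _ => ?_⟩
  simp only [sub_self, mul_zero, sub_zero, mul_one]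
  calc fAff w b x = ∑ i ∈ I, w i * x i + (b + ∑ i ∈ Iᶜ, w i * x i) := by
        rw [fAff, ← sum_add_sum_compl I]
        ring
    _ ≤ _ := add_le_add le_rfl (add_le_add le_rfl (sum_le_sum fun i _ => mul_le_mul_Ubreve hx i))

theorem breveSegment_mk_zero_mem_Pset (hLU : ∀ i, L i ≤ U i) {t : ℝ} (ht0 : 0 ≤ t) (ht1 : t ≤ 1)
    (hf : fAff w b (breveSegment w L U t) ≤ 0)
    (hMpos : 0 ≤ fAff w b (Ubreve w L U)) :
    (breveSegment w L U t, 0, t) ∈ Pset w b L U := by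
  refine ⟨breveSegment_mem_Box hLU ht0 ht1, le_rfl, ht0, ht1, hf, fun I _ => ?_⟩
  have hshift (i : Fin η) :
      breveSegment w L U t i - Lbreve w L U i * (1 - t) = t * Ubreve w L U i := by
    simp only [breveSegment, Pi.add_apply, Pi.smul_apply, smul_eq_mul]
    ring
  have hsum : ∑ i ∈ I, w i * (t * Ubreve w L U i) = t * ∑ i ∈ I, w i * Ubreve w L U i := by
    rw [mul_sum]
    exact sum_congr rfl fun i _ => mul_left_comm _ _ _
  simp only [hshift, hsum]
  calc (0 : ℝ) ≤ t * fAff w b (Ubreve w L U) := mul_nonneg ht0 hMpos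
    _ = _ := by
        rw [fAff, ← sum_add_sum_compl I]
        ring

end ReluFormulation

/-- The lower-bounding inequality `y ≥ f(x)` is facet-defining under strict
activity. -/
theorem lower_bounding_facet_defining {η : ℕ} (w : Fin η → ℝ) (b : ℝ)
    (L U : Fin η → ℝ) (hLU : ∀ i, L i < U i)
    (hMneg : (∑ i, w i * Lbreve w L U i) + b < 0)
    (hMpos : 0 < (∑ i, w i * Ubreve w L U i) + b) :
    ∃ p : Fin (η + 2) → (Fin η → ℝ) × ℝ × ℝ,
      AffineIndependent ℝ p ∧
      ∀ k, p k ∈ Pset w b L U ∧ (p k).2.1 = fAff w b ((p k).1) := by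
  have hLU' : ∀ i, L i ≤ U i := fun i => (hLU i).le
  obtain ⟨t, ht0, ht1, hf⟩ := exists_fAff_breveSegment_eq_zero hMneg hMpos
  set u := Ubreve w L U
  set x := breveSegment w L U t
  have hx : x ∈ Box L U := breveSegment_mem_Box hLU' ht0 ht1.le
  refine ⟨Fin.cons (u, fAff w b u, 1) (Fin.snoc (fun i =>
      (Function.update u i (x i), fAff w b (Function.update u i (x i)), 1)) (x, 0, t)),
    affineIndependent_finCons_finSnoc_update _ _ (breveSegment_apply_ne_Ubreve hLU ht1) _ _ _ _
      ht1.ne, fun k => ?_⟩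
  refine Fin.cases ?_ (Fin.lastCases ?_ fun i => ?_) k
  · exact ⟨mk_fAff_one_mem_Pset (Ubreve_mem_Box hLU') hMpos.le, rfl⟩
  · rw [Fin.cons_succ, Fin.snoc_last]
    exact ⟨breveSegment_mk_zero_mem_Pset hLU' ht0 ht1.le hf.le hMpos.le, hf.symm⟩
  · rw [Fin.cons_succ, Fin.snoc_castSucc]
    exact ⟨mk_fAff_one_mem_Pset (update_mem_Box (Ubreve_mem_Box hLU') hx i)
      (hf ▸ fAff_le_fAff_update_Ubreve hx i), rfl⟩
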